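/- The negative part tsns₋ of the twisted N=1 Schrödinger-Neveu-Schwarz algebra is generated as a Lie superalgebra by the four elements G_{-3/2}, G_{-1/2}, Y_{-1/2}, M_{-1/2}. -/
import Mathlib


noncomputable section

/-- Basis of the twisted N=1 Schrodinger-Neveu-Schwarz algebra.
`L n` is L_n, `G k` is G_{k+1/2}, `Y p` is Y_{p/2}, `M p` is M_{p/2}, `C` is the central element. -/
inductive B : Type
  | L : ℤ → B
  | G : ℤ → B
  | Y : ℤ → B
  | M : ℤ → B
  | C : B
deriving DecidableEq

/-- The underlying vector space of tsns. -/
abbrev V := B →₀ ℂ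

/-- Basis vectors. -/
def e (x : B) : V := Finsupp.single x 1

/-- Parity of a basis element. -/
def isOdd : B → Bool
  | .G _ => true
  | .Y p => if p % 2 = 0 then false else true
  | .M p => if p % 2 = 0 then false else true
  | _ => false

/-- The Koszul sign (-1)^{|x||y|}. -/
def sgn (x y : B) : ℂ := if isOdd x && isOdd y then -1 else 1

/-- The super-bracket on basis elements of tsns. -/
def bb : B → B → V
  | .L n, .L m => ((m : ℂ) - n) • e (.L (n+m)) +
      (if m = -n then (((n:ℂ)^3 - (n:ℂ))/12) • e B.C else 0)
  | .L n, .G k => ((k : ℂ) + 1/2 - (n:ℂ)/2) • e (.G (k+n))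
  | .G k, .L n => (-((k : ℂ) + 1/2 - (n:ℂ)/2)) • e (.G (k+n))
  | .G k, .G l => (2:ℂ) • e (.L (k+l+1)) +
      (if l = -k-1 then ((1 - 4*((k:ℂ)+1/2)^2)/12) • e B.C else 0)
  | .L n, .Y p => (if p % 2 = 0 then (p:ℂ)/2 - (n:ℂ)/2 else (p:ℂ)/2) • e (.Y (p + 2*n))
  | .Y p, .L n => (-(if p % 2 = 0 then (p:ℂ)/2 - (n:ℂ)/2 else (p:ℂ)/2)) • e (.Y (p + 2*n))
  | .L n, .M p => (if p % 2 = 0 then (p:ℂ)/2 else (p:ℂ)/2 + (n:ℂ)/2) • e (.M (p + 2*n))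
  | .M p, .L n => (-(if p % 2 = 0 then (p:ℂ)/2 else (p:ℂ)/2 + (n:ℂ)/2)) • e (.M (p + 2*n))
  | .G k, .Y p => (if p % 2 = 0 then ((p:ℂ)/2 - ((k:ℂ)+1/2))/2 else 2) • e (.Y (p + 2*k + 1))
  | .Y p, .G k => (if p % 2 = 0 then -(((p:ℂ)/2 - ((k:ℂ)+1/2))/2) else 2) • e (.Y (p + 2*k + 1))
  | .G k, .M p => (if p % 2 = 0 then (p:ℂ)/4 else 2) • e (.M (p + 2*k + 1))
  | .M p, .G k => (if p % 2 = 0 then -((p:ℂ)/4) else 2) • e (.M (p + 2*k + 1))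
  | .Y p, .Y q => (if p % 2 = 0 then (if q % 2 = 0 then ((q:ℂ) - p)/4 else (q:ℂ)/4)
      else (if q % 2 = 0 then -((p:ℂ)/4) else 2)) • e (.M (p + q))
  | _, _ => 0

/-- Bilinear extension of the bracket to all of tsns. -/
def br (f g : V) : V := f.sum fun x a => g.sum fun y b => (a * b) • bb x y

/-- The negative part tsns₋. -/
def tsnsMinus : Submodule ℂ V :=
  Submodule.span ℂ {v : V | (∃ n : ℤ, n < 0 ∧ v = e (.L n)) ∨
    (∃ p : ℤ, p < 0 ∧ (v = e (.Y p) ∨ v = e (.M p))) ∨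
    (∃ k : ℤ, k < 0 ∧ v = e (.G k))}

lemma br_e (x y : B) : br (e x) (e y) = bb x y := by
  simp [br, e, Finsupp.sum_single_index]

lemma br_zero_left (g : V) : br 0 g = 0 := by simp [br]

lemma br_zero_right (f : V) : br f 0 = 0 := by simp [br]

lemma br_add_left (f f' g : V) : br (f + f') g = br f g + br f' g := by
  unfold br
  rw [Finsupp.sum_add_index] <;> intros <;> simp [add_mul, add_smul, Finsupp.sum_add]

lemma br_add_right (f g g' : V) : br f (g + g') = br f g + br f g' := by
  unfold br
  rw [← Finsupp.sum_add]
  refine Finsupp.sum_congr fun x _ => ?_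
  rw [Finsupp.sum_add_index] <;> intros <;> simp [mul_add, add_smul]

lemma br_smul_left (c : ℂ) (f g : V) : br (c • f) g = c • br f g := by
  unfold br
  rw [Finsupp.sum_smul_index (fun x => by simp), Finsupp.smul_sum]
  refine Finsupp.sum_congr fun x _ => ?_
  rw [Finsupp.smul_sum]
  refine Finsupp.sum_congr fun y _ => ?_
  rw [smul_smul]; congr 1; ring

lemma br_smul_right (c : ℂ) (f g : V) : br f (c • g) = c • br f g := by
  unfold br
  rw [Finsupp.smul_sum]
  refine Finsupp.sum_congr fun x _ => ?_
  rw [Finsupp.sum_smul_index (fun y => by simp), Finsupp.smul_sum]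
  refine Finsupp.sum_congr fun y _ => ?_
  rw [smul_smul]; congr 1; ring

lemma bb_L_G (n k : ℤ) : bb (.L n) (.G k) = ((k : ℂ) + 1/2 - (n:ℂ)/2) • e (.G (k+n)) := rfl
lemma bb_G_G (k l : ℤ) : bb (.G k) (.G l) = (2:ℂ) • e (.L (k+l+1)) +
      (if l = -k-1 then ((1 - 4*((k:ℂ)+1/2)^2)/12) • e B.C else 0) := rfl
lemma bb_G_Y (k p : ℤ) : bb (.G k) (.Y p) =
    (if p % 2 = 0 then ((p:ℂ)/2 - ((k:ℂ)+1/2))/2 else 2) • e (.Y (p + 2*k + 1)) := rfl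
lemma bb_G_M (k p : ℤ) : bb (.G k) (.M p) =
    (if p % 2 = 0 then (p:ℂ)/4 else 2) • e (.M (p + 2*k + 1)) := rfl

lemma smul_e_congr {c d : ℂ} {z w : B} (h1 : c = d) (h2 : z = w) : c • e z = d • e w := by
  rw [h1, h2]

lemma mem_of_bb {W : Submodule ℂ V}
    (hcl : ∀ x ∈ W, ∀ y ∈ W, br x y ∈ W) {x y z : B} {c : ℂ} (hc : c ≠ 0)
    (h : bb x y = c • e z) (hx : e x ∈ W) (hy : e y ∈ W) : e z ∈ W := by
  have h1 := hcl _ hx _ hy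
  rw [br_e, h] at h1
  have h2 := W.smul_mem c⁻¹ h1
  rwa [smul_smul, inv_mul_cancel₀ hc, one_smul] at h2

example : bb (.G (-1)) (.G (-1)) = (2:ℂ) • e (.L (-1)) := by
  rw [bb_G_G, if_neg (by omega), add_zero]
  exact smul_e_congr rfl (by norm_num)

lemma memL {n : ℤ} (h : n < 0) : e (B.L n) ∈ tsnsMinus :=
  Submodule.subset_span (Or.inl ⟨n, h, rfl⟩)
lemma memY {p : ℤ} (h : p < 0) : e (B.Y p) ∈ tsnsMinus :=
  Submodule.subset_span (Or.inr (Or.inl ⟨p, h, Or.inl rfl⟩))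
lemma memM {p : ℤ} (h : p < 0) : e (B.M p) ∈ tsnsMinus :=
  Submodule.subset_span (Or.inr (Or.inl ⟨p, h, Or.inr rfl⟩))
lemma memG {k : ℤ} (h : k < 0) : e (B.G k) ∈ tsnsMinus :=
  Submodule.subset_span (Or.inr (Or.inr ⟨k, h, rfl⟩))

lemma key_bb : ∀ v ∈ {v : V | (∃ n : ℤ, n < 0 ∧ v = e (.L n)) ∨
    (∃ p : ℤ, p < 0 ∧ (v = e (.Y p) ∨ v = e (.M p))) ∨
    (∃ k : ℤ, k < 0 ∧ v = e (.G k))},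
    ∀ w ∈ {v : V | (∃ n : ℤ, n < 0 ∧ v = e (.L n)) ∨
    (∃ p : ℤ, p < 0 ∧ (v = e (.Y p) ∨ v = e (.M p))) ∨
    (∃ k : ℤ, k < 0 ∧ v = e (.G k))}, br v w ∈ tsnsMinus := by
  rintro v (⟨n, hn, rfl⟩ | ⟨p, hp, rfl | rfl⟩ | ⟨k, hk, rfl⟩) w
      (⟨m, hm, rfl⟩ | ⟨q, hq, rfl | rfl⟩ | ⟨l, hl, rfl⟩) <;> rw [br_e] <;> simp only [bb]
  · rw [if_neg (by omega), add_zero]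
    exact Submodule.smul_mem _ _ (memL (by omega))
  · exact Submodule.smul_mem _ _ (memY (by omega))
  · exact Submodule.smul_mem _ _ (memM (by omega))
  · exact Submodule.smul_mem _ _ (memG (by omega))
  · exact Submodule.smul_mem _ _ (memY (by omega))
  · exact Submodule.smul_mem _ _ (memM (by omega))
  · exact zero_mem _
  · exact Submodule.smul_mem _ _ (memY (by omega))
  · exact Submodule.smul_mem _ _ (memM (by omega))
  · exact zero_mem _
  · exact zero_mem _
  · exact Submodule.smul_mem _ _ (memM (by omega))
  · exact Submodule.smul_mem _ _ (memG (by omega))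
  · exact Submodule.smul_mem _ _ (memY (by omega))
  · exact Submodule.smul_mem _ _ (memM (by omega))
  · rw [if_neg (by omega), add_zero]
    exact Submodule.smul_mem _ _ (memL (by omega))

lemma br_closed : ∀ x ∈ tsnsMinus, ∀ y ∈ tsnsMinus, br x y ∈ tsnsMinus := by
  intro x hx y hy
  unfold tsnsMinus at hx hy
  revert y
  refine Submodule.span_induction (p := fun x _ => ∀ y, y ∈ Submodule.span ℂ _ →
      br x y ∈ tsnsMinus) ?_ ?_ ?_ ?_ hx
  · intro s hs y hy
    refine Submodule.span_induction (p := fun y _ => br s y ∈ tsnsMinus) ?_ ?_ ?_ ?_ hy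
    · intro t ht; exact key_bb s hs t ht
    · show br s 0 ∈ tsnsMinus
      rw [br_zero_right]; exact zero_mem _
    · intro a b _ _ ha hb
      show br s (a + b) ∈ tsnsMinus
      rw [br_add_right]; exact add_mem ha hb
    · intro c a _ ha
      show br s (c • a) ∈ tsnsMinus
      rw [br_smul_right]; exact Submodule.smul_mem _ _ ha
  · intro y _
    show br 0 y ∈ tsnsMinus
    rw [br_zero_left]; exact zero_mem _
  · intro a b _ _ ha hb y hy
    show br (a + b) y ∈ tsnsMinus
    rw [br_add_left]; exact add_mem (ha y hy) (hb y hy)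
  · intro c a _ ha y hy
    show br (c • a) y ∈ tsnsMinus
    rw [br_smul_left]; exact Submodule.smul_mem _ _ (ha y hy)

/-- tsns₋ is generated as a Lie superalgebra by G_{-3/2}, G_{-1/2}, Y_{-1/2},
M_{-1/2}. -/
theorem tsnsMinus_generated :
    ({e (.G (-2)), e (.G (-1)), e (.Y (-1)), e (.M (-1))} : Set V) ⊆ (tsnsMinus : Set V) ∧
    (∀ x ∈ tsnsMinus, ∀ y ∈ tsnsMinus, br x y ∈ tsnsMinus) ∧
    (∀ W : Submodule ℂ V,
      ({e (.G (-2)), e (.G (-1)), e (.Y (-1)), e (.M (-1))} : Set V) ⊆ (W : Set V) →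
      (∀ x ∈ W, ∀ y ∈ W, br x y ∈ W) → tsnsMinus ≤ W) := by
  refine ⟨?_, br_closed, ?_⟩
  · rintro v (rfl | rfl | rfl | rfl)
    · exact memG (by norm_num)
    · exact memG (by norm_num)
    · exact memY (by norm_num)
    · exact memM (by norm_num)
  · intro W hsub hcl
    have hG2 : e (B.G (-2)) ∈ W := hsub (by simp)
    have hG1 : e (B.G (-1)) ∈ W := hsub (by simp)
    have hY1 : e (B.Y (-1)) ∈ W := hsub (by simp)
    have hM1 : e (B.M (-1)) ∈ W := hsub (by simp)
    -- L_{-1}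
    have hL1 : e (B.L (-1)) ∈ W := by
      refine mem_of_bb hcl two_ne_zero ?_ hG1 hG1
      rw [bb_G_G, if_neg (by omega), add_zero]
      exact smul_e_congr rfl (by norm_num)
    -- all G_k, k ≤ -1
    have hGkey : ∀ m : ℕ, e (B.G (-1 - (m : ℤ))) ∈ W := by
      intro m
      induction m with
      | zero => simpa using hG1
      | succ n ih =>
        rcases Nat.eq_zero_or_pos n with rfl | hn
        · simpa using hG2
        · refine mem_of_bb hcl (c := -(n : ℂ)) (by simpa using (by omega : n ≠ 0)) ?_ hL1 ih
          rw [bb_L_G]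
          refine smul_e_congr (by push_cast; ring) ?_
          congr 1
          push_cast
          ring
    have hG : ∀ k : ℤ, k < 0 → e (B.G k) ∈ W := by
      intro k hk
      have h2 : -1 - ((-1 - k).toNat : ℤ) = k := by
        rw [Int.toNat_of_nonneg (by omega)]; ring
      have := hGkey (-1 - k).toNat
      rwa [h2] at this
    -- all L_n, n ≤ -1
    have hL : ∀ n : ℤ, n < 0 → e (B.L n) ∈ W := by
      intro n hn
      refine mem_of_bb hcl two_ne_zero ?_ hG1 (hG n hn)
      rw [bb_G_G, if_neg (by omega), add_zero]
      exact smul_e_congr rfl (by congr 1; ring)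
    -- Y's
    have hYeven : ∀ k : ℤ, k < 0 → e (B.Y (2 * k)) ∈ W := by
      intro k hk
      refine mem_of_bb hcl two_ne_zero ?_ (hG k hk) hY1
      rw [bb_G_Y, if_neg (by omega)]
      exact smul_e_congr rfl (by congr 1; ring)
    have hY2 : e (B.Y (-2)) ∈ W := by simpa using hYeven (-1) (by norm_num)
    have hYodd : ∀ k : ℤ, k < 0 → e (B.Y (2 * k - 1)) ∈ W := by
      intro k hk
      have hc : ((-2 : ℤ) : ℂ) / 2 - ((k : ℂ) + 1/2) ≠ 0 := by
        intro h
        have h2 : ((2 * k + 3 : ℤ) : ℂ) = 0 := by push_cast; push_cast at h; linear_combination -2 * h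
        have h3 : (2 * k + 3 : ℤ) = 0 := by exact_mod_cast h2
        omega
      refine mem_of_bb hcl (c := (((-2 : ℤ) : ℂ) / 2 - ((k : ℂ) + 1/2)) / 2)
        (by exact div_ne_zero hc two_ne_zero) ?_ (hG k hk) hY2
      rw [bb_G_Y, if_pos (by decide)]
      exact smul_e_congr rfl (by congr 1; ring)
    -- M's
    have hMeven : ∀ k : ℤ, k < 0 → e (B.M (2 * k)) ∈ W := by
      intro k hk
      refine mem_of_bb hcl two_ne_zero ?_ (hG k hk) hM1
      rw [bb_G_M, if_neg (by omega)]
      exact smul_e_congr rfl (by congr 1; ring)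
    have hM2 : e (B.M (-2)) ∈ W := by simpa using hMeven (-1) (by norm_num)
    have hModd : ∀ k : ℤ, k < 0 → e (B.M (2 * k - 1)) ∈ W := by
      intro k hk
      refine mem_of_bb hcl (c := ((-2 : ℤ) : ℂ) / 4) (by norm_num) ?_ (hG k hk) hM2
      rw [bb_G_M, if_pos (by decide)]
      exact smul_e_congr rfl (by congr 1; ring)
    -- conclude
    rw [tsnsMinus, Submodule.span_le]
    rintro v (⟨n, hn, rfl⟩ | ⟨p, hp, rfl | rfl⟩ | ⟨k, hk, rfl⟩)
    · exact hL n hn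
    · rcases Int.even_or_odd p with ⟨k, hk2⟩ | ⟨k, hk2⟩
      · obtain rfl : p = 2 * k := by omega
        exact hYeven k (by omega)
      · by_cases h1 : p = -1
        · subst h1; exact hY1
        · obtain rfl : p = 2 * (k + 1) - 1 := by omega
          exact hYodd (k + 1) (by omega)
    · rcases Int.even_or_odd p with ⟨k, hk2⟩ | ⟨k, hk2⟩
      · obtain rfl : p = 2 * k := by omega
        exact hMeven k (by omega)
      · by_cases h1 : p = -1
        · subst h1; exact hM1
        · obtain rfl : p = 2 * (k + 1) - 1 := by omega
          exact hModd (k + 1) (by omega)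
    · exact hG k hk
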